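/- For two orthonormal generators {φ_ℓ}_{ℓ=1}^N, {ψ_ℓ}_{ℓ=1}^N of the same shift-invariant subspace A ⊂ L², the analog coherence μ(Φ,Ψ) = max_{ℓ,r} ess sup_ω |R_{φ_ℓψ_r}(e^{jω})| satisfies 1/√N ≤ μ(Φ,Ψ) ≤ 1. -/

import Mathlib

/-!
Almost everywhere in `ω` the `ψ_r` are orthonormal at `ω` and `φ_ℓ = ∑_r c_{ℓr}(· T) ψ_r` with
`2π`-periodic coefficients, which are constant along the samples `(ω - 2πk)/T`. Hence
`R_{φ_ℓψ_r}(ω) = conj c_{ℓr}(ω)` and `1 = R_{φ_ℓφ_ℓ}(ω) = ∑_r |c_{ℓr}(ω)|²`: every row of the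
cross-spectral matrix is a unit vector of `ℂ^N`. So all its entries have modulus at most `1`,
and some entry of each row has modulus at least `1/√N`.
-/

open MeasureTheory Real
open scoped BigOperators

/-- The sampled cross-spectrum `R_{φψ}(e^{jω})`. -/
noncomputable def sampledCross (T : ℝ) (f g : ℝ → ℂ) (ω : ℝ) : ℂ :=
  (1 / (T : ℂ)) * ∑' k : ℤ, (starRingEnd ℂ) (f ((ω - 2 * π * k) / T)) * g ((ω - 2 * π * k) / T)

open ComplexConjugate

section SquareSummable

variable {ι : Type*}

/-- `tsum` is junk (zero) off summability, so a nonzero `∑' conj (f k) * f k` forces `f ∈ ℓ²`. -/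
lemma summable_norm_sq_of_tsum_conj_mul_self_ne_zero {f : ι → ℂ}
    (h : ∑' k, conj (f k) * f k ≠ 0) : Summable fun k => ‖f k‖ ^ 2 := by
  simp_rw [Complex.conj_mul'] at h
  by_contra hs
  exact h (tsum_eq_zero_of_not_summable fun hc => hs (by exact_mod_cast hc))

lemma summable_conj_mul_of_summable_norm_sq {f g : ι → ℂ}
    (hf : Summable fun k => ‖f k‖ ^ 2) (hg : Summable fun k => ‖g k‖ ^ 2) :
    Summable fun k => conj (f k) * g k := by
  refine Summable.of_norm ((hf.add hg).of_nonneg_of_le (fun k => norm_nonneg _) fun k => ?_)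
  rw [norm_mul, Complex.norm_conj]
  nlinarith [sq_nonneg (‖f k‖ - ‖g k‖)]

lemma tsum_conj_sum_mul_sum {κ : Type*} [Fintype κ] {e : κ → ι → ℂ}
    (he : ∀ s, Summable fun k => ‖e s k‖ ^ 2) (a b : κ → ℂ) :
    ∑' k, conj (∑ s, a s * e s k) * ∑ t, b t * e t k =
      ∑ s, ∑ t, conj (a s) * b t * ∑' k, conj (e s k) * e t k := by
  have hsummable s t := summable_conj_mul_of_summable_norm_sq (he s) (he t)
  have hterm k : conj (∑ s, a s * e s k) * ∑ t, b t * e t k =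
      ∑ s, ∑ t, conj (a s) * b t * (conj (e s k) * e t k) := by
    rw [map_sum, Finset.sum_mul_sum]
    refine Finset.sum_congr rfl fun s _ => Finset.sum_congr rfl fun t _ => ?_
    rw [map_mul]
    ring
  rw [tsum_congr hterm, Summable.tsum_finsetSum fun s _ =>
    summable_sum fun t _ => (hsummable s t).mul_left _]
  refine Finset.sum_congr rfl fun s _ => ?_
  rw [Summable.tsum_finsetSum fun t _ => (hsummable s t).mul_left _]
  simp_rw [tsum_mul_left]

end SquareSummable

lemma Function.Periodic.eval_sample {c : ℝ → ℂ} (hc : Function.Periodic c (2 * π))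
    {T : ℝ} (hT : T ≠ 0) (ω : ℝ) (k : ℤ) : c ((ω - 2 * π * k) / T * T) = c ω := by
  rw [div_mul_cancel₀ _ hT, mul_comm (2 * π)]
  exact hc.sub_int_mul_eq k

section Expansion

variable {ι : Type*} [Fintype ι] [DecidableEq ι] {T ω : ℝ} {e : ι → ℝ → ℂ}

lemma sampledCross_eq_sum_of_orthonormal (hT : T ≠ 0)
    (he : ∀ s t, sampledCross T (e s) (e t) ω = if s = t then 1 else 0)
    {a b : ι → ℝ → ℂ} (ha : ∀ s, Function.Periodic (a s) (2 * π))
    (hb : ∀ s, Function.Periodic (b s) (2 * π)) {f g : ℝ → ℂ}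
    (hf : ∀ x, f x = ∑ s, a s (x * T) * e s x) (hg : ∀ x, g x = ∑ s, b s (x * T) * e s x) :
    sampledCross T f g ω = ∑ s, conj (a s ω) * b s ω := by
  have hsq s : Summable fun k : ℤ => ‖e s ((ω - 2 * π * k) / T)‖ ^ 2 := by
    refine summable_norm_sq_of_tsum_conj_mul_self_ne_zero fun h0 => ?_
    simpa [sampledCross, h0] using he s s
  simp only [sampledCross, hf, hg, (ha _).eval_sample hT, (hb _).eval_sample hT]
  have hR s t : 1 / (T : ℂ) * ∑' k : ℤ, conj (e s ((ω - 2 * π * k) / T)) *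
      e t ((ω - 2 * π * k) / T) = if s = t then 1 else 0 := he s t
  simp_rw [tsum_conj_sum_mul_sum hsq, Finset.mul_sum, mul_left_comm (1 / (T : ℂ)), hR]
  simp

lemma sum_norm_sampledCross_sq_eq_one (hT : T ≠ 0)
    (he : ∀ s t, sampledCross T (e s) (e t) ω = if s = t then 1 else 0)
    {c : ι → ℝ → ℂ} (hc : ∀ s, Function.Periodic (c s) (2 * π)) {f : ℝ → ℂ}
    (hf : ∀ x, f x = ∑ s, c s (x * T) * e s x) (hff : sampledCross T f f ω = 1) :
    ∑ r, ‖sampledCross T f (e r) ω‖ ^ 2 = 1 := by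
  have hcross r : sampledCross T f (e r) ω = conj (c r ω) := by
    simpa using sampledCross_eq_sum_of_orthonormal hT he hc
      (b := fun s _ => if s = r then 1 else 0) (fun _ _ => rfl) hf
      (fun x => by simp)
  have hnorm := sampledCross_eq_sum_of_orthonormal hT he hc hc hf hf
  simp_rw [hff, Complex.conj_mul'] at hnorm
  simp_rw [hcross, Complex.norm_conj]
  exact_mod_cast hnorm.symm

end Expansion

section UnitVector

variable {κ E : Type*} [Fintype κ] [SeminormedAddCommGroup E] {v : κ → E}

lemma norm_le_one_of_sum_norm_sq_eq_one (hv : ∑ r, ‖v r‖ ^ 2 = 1) (r : κ) : ‖v r‖ ≤ 1 := by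
  have : ‖v r‖ ^ 2 ≤ 1 :=
    hv ▸ Finset.single_le_sum (fun s _ => sq_nonneg ‖v s‖) (Finset.mem_univ r)
  nlinarith [norm_nonneg (v r)]

lemma exists_inv_sqrt_card_le_norm_of_sum_norm_sq_eq_one (hv : ∑ r, ‖v r‖ ^ 2 = 1) :
    ∃ r, 1 / √(Fintype.card κ) ≤ ‖v r‖ := by
  have : Nonempty κ := by
    by_contra h
    simp [not_nonempty_iff.mp h] at hv
  obtain ⟨r, hr⟩ := Finite.exists_max fun s => ‖v s‖
  refine ⟨r, ?_⟩
  have hsum : 1 ≤ Fintype.card κ * ‖v r‖ ^ 2 := by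
    calc 1 = ∑ s, ‖v s‖ ^ 2 := hv.symm
      _ ≤ ∑ _s : κ, ‖v r‖ ^ 2 := Finset.sum_le_sum fun s _ => by gcongr; exact hr s
      _ = Fintype.card κ * ‖v r‖ ^ 2 := by simp
  rw [one_div, ← Real.sqrt_inv, Real.sqrt_le_iff]
  refine ⟨norm_nonneg _, ?_⟩
  rwa [inv_le_iff_one_le_mul₀' (by positivity)]

end UnitVector

theorem stmt11_general (N : ℕ) (hN : 0 < N) (T : ℝ) (hT : 0 < T)
    (Φ Ψ : Fin N → ℝ → ℂ)
    (hΦorth : ∀ ℓ r, ∀ᵐ ω ∂(volume : Measure ℝ),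
      sampledCross T (Φ ℓ) (Φ r) ω = if ℓ = r then 1 else 0)
    (hΨorth : ∀ ℓ r, ∀ᵐ ω ∂(volume : Measure ℝ),
      sampledCross T (Ψ ℓ) (Ψ r) ω = if ℓ = r then 1 else 0)
    -- both families generate the same shift-invariant space: each `Φ ℓ` expands in `Ψ`
    (hspanΦ : ∀ ℓ, ∃ c : Fin N → ℝ → ℂ, (∀ r, Function.Periodic (c r) (2 * π)) ∧
      ∀ ω, Φ ℓ ω = ∑ r : Fin N, c r (ω * T) * Ψ r ω)
    (μ : ℝ)
    (hμ : μ = ⨆ ℓ : Fin N, ⨆ r : Fin N,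
      essSup (fun ω => ‖sampledCross T (Φ ℓ) (Ψ r) ω‖) (volume : Measure ℝ)) :
    1 / Real.sqrt N ≤ μ ∧ μ ≤ 1 := by
  choose c hper hexp using hspanΦ
  set R := fun ℓ r ω => ‖sampledCross T (Φ ℓ) (Ψ r) ω‖
  have hrow : ∀ᵐ ω, ∀ ℓ, ∑ r, R ℓ r ω ^ 2 = 1 := by
    filter_upwards [ae_all_iff.2 fun s => ae_all_iff.2 (hΨorth s),
      ae_all_iff.2 fun ℓ => hΦorth ℓ ℓ] with ω hΨω hΦω ℓ
    exact sum_norm_sampledCross_sq_eq_one hT.ne' hΨω (hper ℓ) (hexp ℓ) (by simpa using hΦω ℓ)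
  have hle ℓ r : ∀ᵐ ω, R ℓ r ω ≤ 1 :=
    hrow.mono fun ω h => norm_le_one_of_sum_norm_sq_eq_one (h ℓ) r
  have hess_le ℓ r : essSup (R ℓ r) volume ≤ 1 := essSup_le_of_ae_le 1 (hle ℓ r)
    (Filter.isCoboundedUnder_le_of_le _ fun ω => norm_nonneg _)
  have hle_μ ℓ r : essSup (R ℓ r) volume ≤ μ :=
    hμ ▸ le_ciSup_of_le (Finite.bddAbove_range _) ℓ
      (le_ciSup (f := fun r => essSup (R ℓ r) volume) (Finite.bddAbove_range _) r)
  refine ⟨?_, hμ ▸ Real.iSup_le (fun ℓ => Real.iSup_le (hess_le ℓ) zero_le_one) zero_le_one⟩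
  obtain ⟨ω, hω, hωess⟩ := (hrow.and (ae_all_iff.2 fun ℓ => ae_all_iff.2 fun r =>
    ae_le_essSup (f := R ℓ r) ⟨1, hle ℓ r⟩)).exists
  obtain ⟨r, hr⟩ := exists_inv_sqrt_card_le_norm_of_sum_norm_sq_eq_one (hω ⟨0, hN⟩)
  calc 1 / √N = 1 / √(Fintype.card (Fin N)) := by rw [Fintype.card_fin]
    _ ≤ R ⟨0, hN⟩ r ω := hr
    _ ≤ essSup (R ⟨0, hN⟩ r) volume := hωess _ r
    _ ≤ μ := hle_μ _ r

/-- Bounds on the analog coherence of two orthonormal generators of the same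
shift-invariant space: `1/√N ≤ μ(Φ,Ψ) ≤ 1`, where
`μ(Φ,Ψ) = max_{ℓ,r} ess sup_ω |R_{φ_ℓψ_r}(e^{jω})|`. -/
theorem stmt11 (N : ℕ) (hN : 0 < N) (T : ℝ) (hT : 0 < T)
    (Φ Ψ : Fin N → ℝ → ℂ)
    (hΦmeas : ∀ ℓ, Measurable (Φ ℓ)) (hΨmeas : ∀ ℓ, Measurable (Ψ ℓ))
    (hΦorth : ∀ ℓ r, ∀ᵐ ω ∂(volume : Measure ℝ),
      sampledCross T (Φ ℓ) (Φ r) ω = if ℓ = r then 1 else 0)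
    (hΨorth : ∀ ℓ r, ∀ᵐ ω ∂(volume : Measure ℝ),
      sampledCross T (Ψ ℓ) (Ψ r) ω = if ℓ = r then 1 else 0)
    -- both families generate the same shift-invariant space: each `Φ ℓ` expands in `Ψ`
    (hspanΦ : ∀ ℓ, ∃ c : Fin N → ℝ → ℂ, (∀ r, Function.Periodic (c r) (2 * π)) ∧
      ∀ ω, Φ ℓ ω = ∑ r : Fin N, c r (ω * T) * Ψ r ω)
    (hspanΨ : ∀ ℓ, ∃ c : Fin N → ℝ → ℂ, (∀ r, Function.Periodic (c r) (2 * π)) ∧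
      ∀ ω, Ψ ℓ ω = ∑ r : Fin N, c r (ω * T) * Φ r ω)
    (μ : ℝ)
    (hμ : μ = ⨆ ℓ : Fin N, ⨆ r : Fin N,
      essSup (fun ω => ‖sampledCross T (Φ ℓ) (Ψ r) ω‖) (volume : Measure ℝ)) :
    1 / Real.sqrt N ≤ μ ∧ μ ≤ 1 :=
  stmt11_general N hN T hT Φ Ψ hΦorth hΨorth hspanΦ μ hμ
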